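/- arXiv:2012.08436 — 4 statements merged into one kernel-verified Lean document; each statement's English description precedes it below -/
import Mathlib

section
/- Let C be a binary code of length m with minimum distance exactly 5 whose set of weight-5 codewords forms a 2-(m,5,λ) design. Then λ ≤ (m−2)/3. -/
/-- Let `C` be a binary code of length `m` with minimum distance exactly 5
whose set of weight-5 codewords forms a 2-(m,5,λ) design. Then `λ ≤ (m−2)/3`,
i.e. `3λ ≤ m − 2`. -/
theorem stmt_3 {m lam : ℕ} (C : Set (Fin m → ZMod 2))
    (hmin : ∀ u ∈ C, ∀ v ∈ C, u ≠ v → 5 ≤ hammingDist u v)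
    (hex : ∃ u ∈ C, ∃ v ∈ C, hammingDist u v = 5)
    (hdesign : ∀ i j : Fin m, i ≠ j →
      {c ∈ C | hammingNorm c = 5 ∧ c i = 1 ∧ c j = 1}.ncard = lam) :
    3 * lam ≤ m - 2 := by
  classical
  obtain ⟨u, hu, v, hv, huv⟩ := hex
  have hm : 5 ≤ m := by
    have h := hammingDist_le_card_fintype (x := u) (y := v)
    simpa [huv] using h
  set i : Fin m := ⟨0, by omega⟩ with hi
  set j : Fin m := ⟨1, by omega⟩ with hj
  have hij : i ≠ j := by simp [hi, hj, Fin.ext_iff]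
  set Sset := {c ∈ C | hammingNorm c = 5 ∧ c i = 1 ∧ c j = 1} with hSset
  have hfin : Sset.Finite := Set.toFinite _
  set S : Finset (Fin m → ZMod 2) := hfin.toFinset with hSdef
  have hScard : S.card = lam := by
    rw [← hdesign i j hij, Set.ncard_eq_toFinset_card _ hfin]
  -- support
  set supp : (Fin m → ZMod 2) → Finset (Fin m) := fun c => {k | c k ≠ 0} with hsupp
  have hmem : ∀ c ∈ S, c ∈ C ∧ (supp c).card = 5 ∧ c i = 1 ∧ c j = 1 := by
    intro c hc
    have := hfin.mem_toFinset.mp hc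
    exact ⟨this.1, this.2.1, this.2.2⟩
  have hij_mem : ∀ c ∈ S, i ∈ supp c ∧ j ∈ supp c := by
    intro c hc
    obtain ⟨-, -, hci, hcj⟩ := hmem c hc
    constructor <;> simp [hsupp, hci, hcj]
  set T : (Fin m → ZMod 2) → Finset (Fin m) := fun c => supp c \ {i, j} with hT
  have hIJsub : ∀ c ∈ S, ({i, j} : Finset (Fin m)) ⊆ supp c := by
    intro c hc
    obtain ⟨h1, h2⟩ := hij_mem c hc
    intro k hk
    rcases Finset.mem_insert.mp hk with rfl | hk
    · exact h1
    · rw [Finset.mem_singleton.mp hk]; exact h2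
  have hijcard : ({i, j} : Finset (Fin m)).card = 2 := by
    rw [Finset.card_insert_of_notMem (by simpa using hij), Finset.card_singleton]
  have hTcard : ∀ c ∈ S, (T c).card = 3 := by
    intro c hc
    rw [hT]
    rw [Finset.card_sdiff_of_subset (hIJsub c hc), hijcard, (hmem c hc).2.1]
  -- key: intersection of distinct supports is exactly {i,j}
  have hkey : ∀ α ∈ S, ∀ β ∈ S, α ≠ β → supp α ∩ supp β = {i, j} := by
    intro α hα β hβ hne
    have hAc : (supp α).card = 5 := (hmem α hα).2.1
    have hBc : (supp β).card = 5 := (hmem β hβ).2.1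
    have hsub : ({i, j} : Finset (Fin m)) ⊆ supp α ∩ supp β := by
      intro k hk
      exact Finset.mem_inter.mpr ⟨hIJsub α hα hk, hIJsub β hβ hk⟩
    have ht2 : 2 ≤ (supp α ∩ supp β).card := by
      calc 2 = ({i, j} : Finset (Fin m)).card := hijcard.symm
        _ ≤ _ := Finset.card_le_card hsub
    -- distance
    have hdistset : ({k | α k ≠ β k} : Finset (Fin m))
        = (supp α \ supp β) ∪ (supp β \ supp α) := by
      ext k
      simp only [Finset.mem_filter, Finset.mem_univ, true_and, Finset.mem_union,
        Finset.mem_sdiff, hsupp, Finset.mem_filter]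
      have htri : ∀ a b : ZMod 2, (a ≠ b ↔ (a ≠ 0 ∧ ¬b ≠ 0) ∨ (b ≠ 0 ∧ ¬a ≠ 0)) := by decide
      exact htri (α k) (β k)
    have hd : hammingDist α β = (supp α \ supp β).card + (supp β \ supp α).card := by
      rw [hammingDist, hdistset,
        Finset.card_union_of_disjoint (disjoint_sdiff_sdiff)]
    have e1 : (supp α ∩ supp β).card + (supp α \ supp β).card = 5 := by
      rw [Finset.card_inter_add_card_sdiff, hAc]
    have e2 : (supp β ∩ supp α).card + (supp β \ supp α).card = 5 := by
      rw [Finset.card_inter_add_card_sdiff, hBc]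
    have e3 : (supp β ∩ supp α).card = (supp α ∩ supp β).card := by
      rw [Finset.inter_comm]
    have hdist5 : 5 ≤ hammingDist α β := hmin α (hmem α hα).1 β (hmem β hβ).1 hne
    have ht : (supp α ∩ supp β).card = 2 := by omega
    exact (Finset.eq_of_subset_of_card_le hsub (by omega)).symm
  have hdisj : ∀ α ∈ S, ∀ β ∈ S, α ≠ β → Disjoint (T α) (T β) := by
    intro α hα β hβ hne
    rw [Finset.disjoint_left]
    intro k hkα hkβ
    rw [hT] at hkα hkβ
    simp only [Finset.mem_sdiff] at hkα hkβ
    have : k ∈ supp α ∩ supp β := Finset.mem_inter.mpr ⟨hkα.1, hkβ.1⟩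
    rw [hkey α hα β hβ hne] at this
    exact hkα.2 this
  have hbU : (S.biUnion T).card = 3 * lam := by
    rw [Finset.card_biUnion hdisj, Finset.sum_congr rfl hTcard, Finset.sum_const, hScard,
      smul_eq_mul]
    ring
  have hsub2 : S.biUnion T ⊆ Finset.univ \ {i, j} := by
    intro k hk
    obtain ⟨c, hc, hkc⟩ := Finset.mem_biUnion.mp hk
    rw [hT] at hkc
    simp only [Finset.mem_sdiff] at hkc ⊢
    exact ⟨Finset.mem_univ _, hkc.2⟩
  have := Finset.card_le_card hsub2
  rw [hbU, Finset.card_sdiff_of_subset (by simp), hijcard, Finset.card_univ, Fintype.card_fin] at this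
  exact this
end

section
/- Let C be a binary code of length m with minimum distance exactly 6 whose set of weight-6 codewords forms a 3-(m,6,λ) design. Then λ ≤ (m−3)/3. -/
open Finset

private lemma zmod2_ne_zero_iff (a : ZMod 2) : a ≠ 0 ↔ a = 1 := by
  revert a; decide

/-- Let `C` be a binary code of length `m` with minimum distance exactly 6
whose set of weight-6 codewords forms a 3-(m,6,λ) design. Then `λ ≤ (m−3)/3`,
i.e. `3λ ≤ m − 3`. -/
theorem stmt_4 {m lam : ℕ} (C : Set (Fin m → ZMod 2))
    (hmin : ∀ u ∈ C, ∀ v ∈ C, u ≠ v → 6 ≤ hammingDist u v)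
    (hex : ∃ u ∈ C, ∃ v ∈ C, u ≠ v ∧ hammingDist u v = 6)
    (hdesign : ∀ i j k : Fin m, i ≠ j → i ≠ k → j ≠ k →
      {c ∈ C | hammingNorm c = 6 ∧ c i = 1 ∧ c j = 1 ∧ c k = 1}.ncard = lam) :
    3 * lam ≤ m - 3 := by
  classical
  obtain ⟨u, hu, v, hv, huv, hd⟩ := hex
  have hm : 6 ≤ m := by
    have h := hammingDist_le_card_fintype (x := u) (y := v)
    simpa [hd] using h
  set i : Fin m := ⟨0, by omega⟩ with hi
  set j : Fin m := ⟨1, by omega⟩ with hj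
  set k : Fin m := ⟨2, by omega⟩ with hk
  have hij : i ≠ j := by simp [hi, hj, Fin.ext_iff]
  have hik : i ≠ k := by simp [hi, hk, Fin.ext_iff]
  have hjk : j ≠ k := by simp [hj, hk, Fin.ext_iff]
  set S : Set (Fin m → ZMod 2) :=
    {c ∈ C | hammingNorm c = 6 ∧ c i = 1 ∧ c j = 1 ∧ c k = 1} with hS
  have hScard : S.ncard = lam := hdesign i j k hij hik hjk
  have hSfin : S.Finite := Set.toFinite S
  set F : Finset (Fin m → ZMod 2) := hSfin.toFinset with hFdef
  have hF : F.card = lam := by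
    rw [hFdef, ← Set.ncard_eq_toFinset_card _ hSfin]
    exact hScard
  set supp : (Fin m → ZMod 2) → Finset (Fin m) :=
    fun c => univ.filter (fun x => c x ≠ 0) with hsupp
  set ijk : Finset (Fin m) := {i, j, k} with hijk
  have hijkcard : ijk.card = 3 :=
    Finset.card_eq_three.mpr ⟨i, j, k, hij, hik, hjk, rfl⟩
  have hmemF : ∀ c ∈ F, c ∈ C ∧ (supp c).card = 6 ∧ ijk ⊆ supp c := by
    intro c hc
    rw [hFdef, Set.Finite.mem_toFinset] at hc
    obtain ⟨hcC, hnorm, hci, hcj, hck⟩ := hc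
    refine ⟨hcC, ?_, ?_⟩
    · simpa [hsupp, hammingNorm] using hnorm
    · intro x hx
      simp only [hijk, mem_insert, mem_singleton] at hx
      simp only [hsupp, mem_filter, mem_univ, true_and]
      rcases hx with rfl | rfl | rfl <;> simp [hci, hcj, hck]
  set T : (Fin m → ZMod 2) → Finset (Fin m) := fun c => supp c \ ijk with hT
  have hTcard : ∀ c ∈ F, (T c).card = 3 := by
    intro c hc
    obtain ⟨-, h6, hsub⟩ := hmemF c hc
    rw [hT]
    simp only
    rw [Finset.card_sdiff_of_subset hsub, h6, hijkcard]
  have hinter : ∀ c ∈ F, ∀ c' ∈ F, c ≠ c' → supp c ∩ supp c' = ijk := by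
    intro c hc c' hc' hne
    obtain ⟨hcC, h6, hsub⟩ := hmemF c hc
    obtain ⟨hcC', h6', hsub'⟩ := hmemF c' hc'
    have hsubint : ijk ⊆ supp c ∩ supp c' :=
      Finset.subset_inter hsub hsub'
    have hdist : 6 ≤ hammingDist c c' := hmin c hcC c' hcC' hne
    -- hammingDist ≤ |supp c \ supp c'| + |supp c' \ supp c|
    have hdistle : hammingDist c c' ≤ (supp c \ supp c').card + (supp c' \ supp c).card := by
      rw [hammingDist]
      calc (univ.filter fun x => c x ≠ c' x).card
          ≤ ((supp c \ supp c') ∪ (supp c' \ supp c)).card := by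
            apply Finset.card_le_card
            intro x hx
            simp only [mem_filter, mem_univ, true_and] at hx
            simp only [mem_union, mem_sdiff, hsupp, mem_filter, mem_univ, true_and]
            by_cases h0 : c x = 0
            · right
              refine ⟨?_, by simp [h0]⟩
              intro h0'
              exact hx (by rw [h0, h0'])
            · left
              refine ⟨h0, ?_⟩
              intro h0'
              exact hx (by rw [(zmod2_ne_zero_iff _).mp h0, (zmod2_ne_zero_iff _).mp h0'])
        _ ≤ (supp c \ supp c').card + (supp c' \ supp c).card :=
            Finset.card_union_le _ _
    have e1 : (supp c \ supp c').card + (supp c ∩ supp c').card = (supp c).card :=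
      Finset.card_sdiff_add_card_inter _ _
    have e2 : (supp c' \ supp c).card + (supp c' ∩ supp c).card = (supp c').card :=
      Finset.card_sdiff_add_card_inter _ _
    have ecomm : supp c' ∩ supp c = supp c ∩ supp c' := Finset.inter_comm _ _
    rw [ecomm] at e2
    have hle3 : (supp c ∩ supp c').card ≤ 3 := by omega
    have := Finset.eq_of_subset_of_card_le hsubint (by omega)
    exact this.symm
  have hdisj : ∀ c ∈ F, ∀ c' ∈ F, c ≠ c' → Disjoint (T c) (T c') := by
    intro c hc c' hc' hne
    rw [Finset.disjoint_left]
    intro x hx hx'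
    rw [hT] at hx hx'
    simp only [mem_sdiff] at hx hx'
    have : x ∈ supp c ∩ supp c' := Finset.mem_inter.mpr ⟨hx.1, hx'.1⟩
    rw [hinter c hc c' hc' hne] at this
    exact hx.2 this
  have hbUsub : F.biUnion T ⊆ univ \ ijk := by
    intro x hx
    rw [Finset.mem_biUnion] at hx
    obtain ⟨c, hc, hxc⟩ := hx
    rw [hT] at hxc
    simp only [mem_sdiff] at hxc ⊢
    exact ⟨mem_univ x, hxc.2⟩
  have hbUcard : (F.biUnion T).card = 3 * lam := by
    rw [Finset.card_biUnion hdisj, Finset.sum_congr rfl hTcard]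
    simp [hF, mul_comm]
  have hcompl : (univ \ ijk).card = m - 3 := by
    rw [Finset.card_sdiff_of_subset (Finset.subset_univ _), hijkcard]
    simp
  calc 3 * lam = (F.biUnion T).card := hbUcard.symm
    _ ≤ (univ \ ijk).card := Finset.card_le_card hbUsub
    _ = m - 3 := hcompl
end

section
/- Let C be a completely transitive code in H(m,q) and let ⟨C⟩ be a code containing C with Aut(C) ≤ Aut(⟨C⟩), such that Aut(⟨C⟩) acts transitively on ⟨C⟩. Then ⟨C⟩ is completely transitive. -/
/-- An automorphism of a code `D` in the Hamming graph `H(m,q)`: a permutation of the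
vertex set preserving Hamming distance and stabilising `D` setwise. -/
def IsAutoOf {m : ℕ} {Q : Type*} [Fintype Q] [DecidableEq Q]
    (D : Set (Fin m → Q)) (f : Equiv.Perm (Fin m → Q)) : Prop :=
  (∀ u v : Fin m → Q, hammingDist (f u) (f v) = hammingDist u v) ∧
    ∀ v : Fin m → Q, v ∈ D ↔ f v ∈ D

/-- The distance from a vertex to a code. -/
noncomputable def distToCode {m : ℕ} {Q : Type*} [Fintype Q] [DecidableEq Q]
    (D : Set (Fin m → Q)) (v : Fin m → Q) : ℕ :=
  sInf {n : ℕ | ∃ c ∈ D, hammingDist v c = n}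

/-- A code is completely transitive if its automorphism group acts transitively on each
set `D_i` of vertices at distance exactly `i` from `D`. -/
def CompletelyTransitiveCode {m : ℕ} {Q : Type*} [Fintype Q] [DecidableEq Q]
    (D : Set (Fin m → Q)) : Prop :=
  ∀ u v : Fin m → Q, distToCode D u = distToCode D v →
    ∃ f : Equiv.Perm (Fin m → Q), IsAutoOf D f ∧ f u = v

/-- Automorphisms preserve the distance to the code. -/
lemma distToCode_auto {m : ℕ} {Q : Type*} [Fintype Q] [DecidableEq Q]
    {D : Set (Fin m → Q)} {f : Equiv.Perm (Fin m → Q)} (hf : IsAutoOf D f)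
    (u : Fin m → Q) : distToCode D (f u) = distToCode D u := by
  unfold distToCode
  congr 1
  ext n
  constructor
  · rintro ⟨c, hc, hd⟩
    refine ⟨f.symm c, ?_, ?_⟩
    · rw [hf.2]; simpa using hc
    · rw [← hf.1 u (f.symm c)]; simpa using hd
  · rintro ⟨c, hc, hd⟩
    exact ⟨f c, (hf.2 c).1 hc, by rw [hf.1]; exact hd⟩

/-- Inverse of an automorphism is an automorphism. -/
lemma isAutoOf_inv {m : ℕ} {Q : Type*} [Fintype Q] [DecidableEq Q]
    {D : Set (Fin m → Q)} {f : Equiv.Perm (Fin m → Q)} (hf : IsAutoOf D f) :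
    IsAutoOf D f.symm := by
  constructor
  · intro u v
    rw [← hf.1 (f.symm u) (f.symm v)]; simp
  · intro v
    rw [hf.2 (f.symm v)]; simp

lemma isAutoOf_comp {m : ℕ} {Q : Type*} [Fintype Q] [DecidableEq Q]
    {D : Set (Fin m → Q)} {f g : Equiv.Perm (Fin m → Q)} (hf : IsAutoOf D f)
    (hg : IsAutoOf D g) : IsAutoOf D (f.trans g) := by
  refine ⟨fun u v => ?_, fun v => ?_⟩
  · simp [hg.1, hf.1]
  · simp only [Equiv.trans_apply]
    rw [hf.2 v, hg.2 (f v)]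

/-- Let `C` be a completely transitive code in `H(m,q)` and let `D = ⟨C⟩` be a
code containing `C` with `Aut(C) ≤ Aut(D)`, such that `Aut(D)` acts transitively on `D`.
Then `D` is completely transitive. -/
theorem stmt_7 {m : ℕ} {Q : Type*} [Fintype Q] [DecidableEq Q]
    (C D : Set (Fin m → Q)) (hCD : C ⊆ D) (hC : C.Nonempty)
    (hct : CompletelyTransitiveCode C)
    (hle : ∀ f : Equiv.Perm (Fin m → Q), IsAutoOf C f → IsAutoOf D f)
    (htr : ∀ u ∈ D, ∀ v ∈ D, ∃ f : Equiv.Perm (Fin m → Q), IsAutoOf D f ∧ f u = v) :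
    CompletelyTransitiveCode D := by
  obtain ⟨c0, hc0⟩ := hC
  -- key step: move any vertex to one whose distance to C equals its distance to D
  have key : ∀ u : Fin m → Q, ∃ f : Equiv.Perm (Fin m → Q), IsAutoOf D f ∧
      distToCode C (f u) = distToCode D u := by
    intro u
    -- the defining set is nonempty
    have hne : {n : ℕ | ∃ c ∈ D, hammingDist u c = n}.Nonempty :=
      ⟨hammingDist u c0, c0, hCD hc0, rfl⟩
    obtain ⟨c, hcD, hdc⟩ := Nat.sInf_mem hne
    obtain ⟨f, hf, hfc⟩ := htr c hcD c0 (hCD hc0)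
    refine ⟨f, hf, le_antisymm ?_ ?_⟩
    · apply Nat.sInf_le
      exact ⟨c0, hc0, by rw [← hfc, hf.1]; exact hdc⟩
    · rw [← distToCode_auto hf u]
      refine le_csInf ⟨hammingDist (f u) c0, c0, hc0, rfl⟩ ?_
      rintro n ⟨c', hc', hd⟩
      exact Nat.sInf_le ⟨c', hCD hc', hd⟩
  intro u v huv
  obtain ⟨f, hf, hfu⟩ := key u
  obtain ⟨g, hg, hgv⟩ := key v
  obtain ⟨h, hh, hhu⟩ := hct (f u) (g v) (by rw [hfu, hgv, huv])
  refine ⟨(f.trans h).trans g.symm, isAutoOf_comp (isAutoOf_comp hf (hle h hh)) (isAutoOf_inv hg), ?_⟩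
  simp [hhu]
end

section
/- The number of blocks of any 4-(32,8,λ) design is a multiple of 3596, and 3596 does not divide 620; hence no binary code of length 32 whose 620 weight-8 codewords form a 4-design can exist. -/
/-- The number of blocks of any 4-(32,8,λ) design is a multiple of 3596,
and 3596 does not divide 620; hence no such design (e.g. the weight-8 codewords of a
binary code of length 32 forming a 4-design) can have exactly 620 blocks. -/
theorem stmt_19 (lam : ℕ) (D : Finset (Finset (Fin 32)))
    (hblocks : ∀ b ∈ D, b.card = 8)
    (hdesign : ∀ p : Finset (Fin 32), p.card = 4 →
      (D.filter (fun b => p ⊆ b)).card = lam) :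
    3596 ∣ D.card ∧ ¬ ((3596 : ℕ) ∣ 620) ∧ D.card ≠ 620 := by
  set T : Finset (Finset (Fin 32)) := (Finset.univ : Finset (Fin 32)).powersetCard 4 with hT
  have key : ∑ p ∈ T, (D.filter (fun b => p ⊆ b)).card
      = ∑ b ∈ D, (T.filter (fun p => p ⊆ b)).card := by
    simp only [Finset.card_filter]
    exact Finset.sum_comm
  have hL : ∑ p ∈ T, (D.filter (fun b => p ⊆ b)).card = 35960 * lam := by
    rw [Finset.sum_congr rfl (fun p hp => hdesign p (Finset.mem_powersetCard.mp hp).2),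
      Finset.sum_const, smul_eq_mul]
    rw [Finset.card_powersetCard, Finset.card_univ, Fintype.card_fin]
    norm_num [Nat.choose]
  have hR : ∑ b ∈ D, (T.filter (fun p => p ⊆ b)).card = 70 * D.card := by
    rw [Finset.sum_congr rfl (fun b hb => ?_), Finset.sum_const, smul_eq_mul, mul_comm]
    have : T.filter (fun p => p ⊆ b) = b.powersetCard 4 := by
      ext p
      simp [hT, Finset.mem_powersetCard, and_comm]
    rw [this, Finset.card_powersetCard, hblocks b hb]
    norm_num [Nat.choose]
  have heq : 35960 * lam = 70 * D.card := by rw [← hL, key, hR]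
  have h7 : 3596 * (10 * lam) = (7 * D.card) * 10 := by ring_nf; ring_nf at heq; omega
  have hdvd : 3596 ∣ 7 * D.card := by
    refine ⟨lam, ?_⟩
    omega
  have hcop : Nat.Coprime 3596 7 := by decide
  have h1 : 3596 ∣ D.card := (Nat.Coprime.dvd_of_dvd_mul_left hcop hdvd)
  refine ⟨h1, by decide, fun h => ?_⟩
  rw [h] at h1
  exact absurd h1 (by decide)
end
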